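/- arXiv:1705.00437 — 2 statements merged into one kernel-verified Lean document; each statement's English description precedes it below -/
import Mathlib

section
/- Let k ∈ ℕ, k ≥ 1, c₀, c₁, c₂ > 0 with c₁ ≤ c₂, and let ν, τ₁, τ₂ : ℝ → ℝ satisfy c₁ ≤ ν ≤ c₂, 0 ≤ τ₁, τ₂ ≤ c₀, τ₁τ₂ ≡ 0. Define Sᵏ(D, e) as the approximate stress Sᵏ(D, e) = min{k + 2ν(e), (2ν(e)(|D| − τ₁(e))⁺ + τ₂(e))/|D|}·D (Sᵏ(0,e) = 0). Then there exist α, β > 0 independent of k, D and e such that Sᵏ(D, e) · D ≥ α(|Sᵏ(D, e)|² + |D|²) − β for all D ∈ ℝ^{3×3} and e ∈ ℝ. -/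
/-- Frobenius inner product on 3×3 real matrices. -/
noncomputable def Mdot (A B : Matrix (Fin 3) (Fin 3) ℝ) : ℝ := ∑ i, ∑ j, A i j * B i j

/-- Frobenius norm. -/
noncomputable def Mnorm (A : Matrix (Fin 3) (Fin 3) ℝ) : ℝ := Real.sqrt (Mdot A A)

/-- The approximate stress Sᵏ(D, e) = min{k + 2ν(e), (2ν(e)(|D| − τ₁(e))⁺ + τ₂(e))/|D|}·D,
with Sᵏ(0, e) = 0. -/
noncomputable def Sk (k : ℕ) (ν τ₁ τ₂ : ℝ → ℝ) (D : Matrix (Fin 3) (Fin 3) ℝ) (e : ℝ) :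
    Matrix (Fin 3) (Fin 3) ℝ :=
  if D = 0 then 0
  else min ((k : ℝ) + 2 * ν e) ((2 * ν e * max (Mnorm D - τ₁ e) 0 + τ₂ e) / Mnorm D) • D

lemma Mdot_self_nonneg (A : Matrix (Fin 3) (Fin 3) ℝ) : 0 ≤ Mdot A A := by
  apply Finset.sum_nonneg; intro i _
  exact Finset.sum_nonneg fun j _ => mul_self_nonneg _

lemma Mnorm_sq (A : Matrix (Fin 3) (Fin 3) ℝ) : Mnorm A ^ 2 = Mdot A A :=
  Real.sq_sqrt (Mdot_self_nonneg A)

lemma Mdot_smul_left (m : ℝ) (A B : Matrix (Fin 3) (Fin 3) ℝ) :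
    Mdot (m • A) B = m * Mdot A B := by
  unfold Mdot
  simp [Matrix.smul_apply, Finset.mul_sum, mul_assoc]

lemma Mdot_smul_right (m : ℝ) (A B : Matrix (Fin 3) (Fin 3) ℝ) :
    Mdot A (m • B) = m * Mdot A B := by
  unfold Mdot
  simp [Matrix.smul_apply, Finset.mul_sum]
  congr 1; ext i; congr 1; ext j; ring

lemma Mnorm_smul (m : ℝ) (A : Matrix (Fin 3) (Fin 3) ℝ) :
    Mnorm (m • A) = |m| * Mnorm A := by
  unfold Mnorm
  rw [Mdot_smul_left, Mdot_smul_right, ← mul_assoc, ← sq,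
    Real.sqrt_mul (sq_nonneg m), Real.sqrt_sq_eq_abs]

lemma Mnorm_pos {D : Matrix (Fin 3) (Fin 3) ℝ} (h : D ≠ 0) : 0 < Mnorm D := by
  apply Real.sqrt_pos.mpr
  rcases lt_or_eq_of_le (Mdot_self_nonneg D) with h' | h'
  · exact h'
  · exfalso; apply h
    ext i j
    have h2 : ∑ j, D i j * D i j ≤ Mdot D D := by
      apply Finset.single_le_sum (f := fun i => ∑ j, D i j * D i j)
        (fun i _ => Finset.sum_nonneg fun j _ => mul_self_nonneg _) (Finset.mem_univ i)
    have h3 : D i j * D i j ≤ ∑ j, D i j * D i j :=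
      Finset.single_le_sum (fun j _ => mul_self_nonneg (D i j)) (Finset.mem_univ j)
    have : D i j * D i j ≤ 0 := by rw [← h'] at h2; linarith
    simpa using mul_self_eq_zero.mp (le_antisymm this (mul_self_nonneg _))

set_option maxHeartbeats 1000000 in
theorem stmt8 (c₀ c₁ c₂ : ℝ) (hc₀ : 0 < c₀) (hc₁ : 0 < c₁) (hc₂ : 0 < c₂) (h12 : c₁ ≤ c₂)
    (ν τ₁ τ₂ : ℝ → ℝ)
    (hν : ∀ e, c₁ ≤ ν e ∧ ν e ≤ c₂)
    (hτ₁ : ∀ e, 0 ≤ τ₁ e ∧ τ₁ e ≤ c₀) (hτ₂ : ∀ e, 0 ≤ τ₂ e ∧ τ₂ e ≤ c₀)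
    (hcomp : ∀ e, τ₁ e * τ₂ e = 0) :
    ∃ α > (0:ℝ), ∃ β > (0:ℝ), ∀ (k : ℕ), 1 ≤ k → ∀ (D : Matrix (Fin 3) (Fin 3) ℝ) (e : ℝ),
      Mdot (Sk k ν τ₁ τ₂ D e) D ≥ α * (Mnorm (Sk k ν τ₁ τ₂ D e) ^ 2 + Mnorm D ^ 2) - β := by
  set α := c₁ / (2 * (8 * c₂ ^ 2 + 1)) with hα
  have hαpos : 0 < α := by positivity
  refine ⟨α, hαpos, 2 * c₁ * c₀ ^ 2 + 2 * α * c₀ ^ 2 + 1, by positivity, ?_⟩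
  intro k hk D e
  by_cases hD : D = 0
  · subst hD
    have h0 : Sk k ν τ₁ τ₂ (0 : Matrix (Fin 3) (Fin 3) ℝ) e = 0 := by simp [Sk]
    rw [h0]
    have hd0 : Mdot (0 : Matrix (Fin 3) (Fin 3) ℝ) 0 = 0 := by unfold Mdot; simp
    have hn0 : Mnorm (0 : Matrix (Fin 3) (Fin 3) ℝ) = 0 := by unfold Mnorm; rw [hd0]; simp
    rw [hd0, hn0]
    nlinarith [mul_nonneg hc₁.le (sq_nonneg c₀), mul_nonneg hαpos.le (sq_nonneg c₀)]
  · have hn : 0 < Mnorm D := Mnorm_pos hD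
    set n := Mnorm D with hndef
    obtain ⟨hν1, hν2⟩ := hν e
    obtain ⟨hτ11, hτ12⟩ := hτ₁ e
    obtain ⟨hτ21, hτ22⟩ := hτ₂ e
    set m := min ((k : ℝ) + 2 * ν e) ((2 * ν e * max (n - τ₁ e) 0 + τ₂ e) / n) with hm
    have hSk : Sk k ν τ₁ τ₂ D e = m • D := by rw [Sk, if_neg hD]
    have hmax0 : (0:ℝ) ≤ max (n - τ₁ e) 0 := le_max_right _ _
    have hmaxl : n - τ₁ e ≤ max (n - τ₁ e) 0 := le_max_left _ _
    have hmaxn : max (n - τ₁ e) 0 ≤ n := max_le (by linarith) hn.le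
    have hk1 : (1:ℝ) ≤ (k:ℝ) := by exact_mod_cast hk
    have hnum0 : 0 ≤ 2 * ν e * max (n - τ₁ e) 0 + τ₂ e :=
      add_nonneg (mul_nonneg (by linarith) hmax0) hτ21
    have hm0 : 0 ≤ m := le_min (by linarith) (div_nonneg hnum0 hn.le)
    have hmn : m * n ≤ 2 * c₂ * n + c₀ := by
      have h1 : m ≤ (2 * ν e * max (n - τ₁ e) 0 + τ₂ e) / n := min_le_right _ _
      have h2 : m * n ≤ 2 * ν e * max (n - τ₁ e) 0 + τ₂ e := by
        rw [← le_div_iff₀ hn]; exact h1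
      nlinarith [mul_le_mul_of_nonneg_left hmaxn (by linarith : (0:ℝ) ≤ 2 * ν e)]
    have hdot : Mdot (m • D) D = m * n ^ 2 := by
      rw [Mdot_smul_left, ← Mnorm_sq]
    have hnorm : Mnorm (m • D) = m * n := by
      rw [Mnorm_smul, abs_of_nonneg hm0]
    rw [hSk, hdot, hnorm]
    have hP : (m * n) ^ 2 ≤ 8 * c₂ ^ 2 * n ^ 2 + 2 * c₀ ^ 2 := by
      nlinarith [sq_nonneg (2 * c₂ * n - c₀), mul_nonneg hm0 hn.le,
        mul_nonneg (mul_nonneg hc₂.le hn.le) hc₀.le]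
    have hkey : α * (8 * c₂ ^ 2 * n ^ 2) + α * n ^ 2 = c₁ / 2 * n ^ 2 := by
      rw [hα]; field_simp
    have hαP := mul_le_mul_of_nonneg_left hP hαpos.le
    have hmlow : 2 * c₀ ≤ n → c₁ ≤ m := by
      intro hcase
      apply le_min (by linarith)
      rw [le_div_iff₀ hn]
      nlinarith [mul_nonneg (by linarith : (0:ℝ) ≤ ν e - c₁) hmax0,
        mul_nonneg (by linarith : (0:ℝ) ≤ ν e) (by linarith : (0:ℝ) ≤ max (n - τ₁ e) 0 - (n - τ₁ e))]
    clear_value n m α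
    clear hSk hdot hnorm hndef hm hD D
    rcases le_or_gt (2 * c₀) n with hcase | hcase
    · -- large |D|: m ≥ c₁
      have hmc : c₁ ≤ m := hmlow hcase
      have hmn2 : c₁ * n ^ 2 ≤ m * n ^ 2 :=
        mul_le_mul_of_nonneg_right hmc (sq_nonneg n)
      linarith [hαP, hkey, hmn2, mul_nonneg hc₁.le (sq_nonneg n),
        mul_nonneg hc₁.le (sq_nonneg c₀), mul_nonneg hαpos.le (sq_nonneg c₀)]
    · -- small |D|
      have hn4 : n ^ 2 ≤ 4 * c₀ ^ 2 := by
        linarith [mul_lt_mul_of_pos_left hcase hn, mul_lt_mul_of_pos_right hcase hc₀]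
      have hc1n : c₁ * n ^ 2 ≤ c₁ * (4 * c₀ ^ 2) := mul_le_mul_of_nonneg_left hn4 hc₁.le
      have hmn2 : 0 ≤ m * n ^ 2 := mul_nonneg hm0 (sq_nonneg n)
      linarith [hαP, hkey, hc1n, hmn2, mul_nonneg hαpos.le (sq_nonneg c₀)]
end

section
/- Let k ≥ 1, and let ν, τ₂ satisfy c₁ ≤ ν(e) ≤ c₂, 0 ≤ τ₂(e) ≤ c₀, and suppose τ₁(e) = 0. Let (S, D, e) ∈ 𝒜ᵏ, i.e. S = min{k + 2ν(e), (2ν(e)|D| + τ₂(e))/|D|}·D (with S = 0 for D = 0). Define the projected strain D̄ by: if |S| < τ₂(e) + 2ν(e)τ₂(e)/k then D̄ = (1/(2ν(e)))·((|S| − τ₂(e))⁺/|S|)·S (D̄ = 0 if S = 0), and D̄ = D otherwise. Then |D̄ − D| ≤ 2τ₂(e)/k ≤ 2c₀/k. -/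
/-- Truncation map ((|A| − τ)⁺/|A|)·A, with value 0 at A = 0. -/
noncomputable def trunc (τ : ℝ) (A : Matrix (Fin 3) (Fin 3) ℝ) : Matrix (Fin 3) (Fin 3) ℝ :=
  if A = 0 then 0 else (max (Mnorm A - τ) 0 / Mnorm A) • A

/-! With `τ₁ = 0` the stress is `Sᵏ(D) = m • D` with `m = min (k + 2ν) (2ν + τ/|D|)`, and the
projected strain `(1/(2ν)) • trunc τ S` is `λ • D` with `λ = (m|D| - τ)⁺/(2ν|D|)`. If the minimum
is the second term then `λ = 1`; otherwise `k|D| ≤ τ` and `0 ≤ λ ≤ 1`, so the distance to `D` is at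
most `|D| ≤ τ/k`. This bound holds for both branches in the definition of `D̄`. -/

lemma abs_max_sub_div_sub_one_mul_le {k ν τ d : ℝ} (hk : 0 < k) (hν : 0 < ν) (hτ : 0 ≤ τ)
    (hd : 0 < d) :
    |max (min (k + 2 * ν) ((2 * ν * d + τ) / d) * d - τ) 0 / (2 * ν * d) - 1| * d ≤ τ / k := by
  have h2νd : 0 < 2 * ν * d := by positivity
  rcases le_total ((2 * ν * d + τ) / d) (k + 2 * ν) with hmin | hmin
  · rw [min_eq_right hmin, div_mul_cancel₀ _ hd.ne', add_sub_cancel_right,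
      max_eq_left h2νd.le, div_self h2νd.ne', sub_self, abs_zero, zero_mul]
    positivity
  · have hkd : k * d ≤ τ := by
      rw [le_div_iff₀ hd] at hmin
      linarith
    set q := max (min (k + 2 * ν) ((2 * ν * d + τ) / d) * d - τ) 0 / (2 * ν * d)
    have hq_nonneg : 0 ≤ q := div_nonneg (le_max_right _ _) h2νd.le
    have hq_le_one : q ≤ 1 := by
      rw [div_le_one h2νd, min_eq_left hmin]
      exact max_le (by linarith) h2νd.le
    calc |q - 1| * d ≤ 1 * d := by gcongr; rw [abs_le]; constructor <;> linarith
      _ ≤ τ / k := by rw [one_mul, le_div_iff₀ hk]; linarith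

section Frobenius

attribute [local instance] Matrix.frobeniusNormedAddCommGroup Matrix.frobeniusNormedSpace

lemma Mnorm_eq_norm (A : Matrix (Fin 3) (Fin 3) ℝ) : Mnorm A = ‖A‖ := by
  simp only [Mnorm, Mdot, Matrix.frobenius_norm_def, Real.norm_eq_abs, Real.rpow_two, sq_abs,
    Real.sqrt_eq_rpow, ← sq]

lemma Mnorm_zero : Mnorm 0 = 0 := by
  rw [Mnorm_eq_norm, norm_zero]

lemma Sk_eq_smul_of_ne_zero (k : ℕ) (ν τ : ℝ → ℝ) {D : Matrix (Fin 3) (Fin 3) ℝ} (hD : D ≠ 0)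
    (e : ℝ) :
    Sk k ν (fun _ => 0) τ D e = min ((k : ℝ) + 2 * ν e) ((2 * ν e * ‖D‖ + τ e) / ‖D‖) • D := by
  rw [Sk, if_neg hD, Mnorm_eq_norm, sub_zero, max_eq_left (norm_nonneg D)]

lemma trunc_smul_of_pos {m : ℝ} (τ : ℝ) (hm : 0 < m) {D : Matrix (Fin 3) (Fin 3) ℝ}
    (hD : D ≠ 0) : trunc τ (m • D) = (max (m * ‖D‖ - τ) 0 / ‖D‖) • D := by
  rw [trunc, if_neg (smul_ne_zero hm.ne' hD), Mnorm_eq_norm, norm_smul,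
    Real.norm_of_nonneg hm.le, smul_smul]
  congr 1
  field_simp [norm_ne_zero_iff.mpr hD]

lemma Mnorm_smul_trunc_Sk_sub_le {k : ℕ} (hk : 0 < k) {ν τ : ℝ} (hν : 0 < ν) (hτ : 0 ≤ τ)
    (D : Matrix (Fin 3) (Fin 3) ℝ) (e : ℝ) :
    Mnorm ((1 / (2 * ν)) • trunc τ (Sk k (fun _ => ν) (fun _ => 0) (fun _ => τ) D e) - D)
      ≤ τ / k := by
  by_cases hD : D = 0
  · subst hD
    simp only [Sk, trunc, if_true, smul_zero, sub_zero, Mnorm_zero]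
    positivity
  have hm : 0 < min ((k : ℝ) + 2 * ν) ((2 * ν * ‖D‖ + τ) / ‖D‖) := by
    have := norm_pos_iff.mpr hD
    apply lt_min <;> positivity
  have hsub : ∀ c : ℝ, c • D - D = (c - 1) • D := fun c => by rw [sub_smul, one_smul]
  rw [Sk_eq_smul_of_ne_zero _ _ _ hD, trunc_smul_of_pos _ hm hD, smul_smul, hsub,
    Mnorm_eq_norm, norm_smul, Real.norm_eq_abs]
  convert abs_max_sub_div_sub_one_mul_le (Nat.cast_pos.mpr hk) hν hτ (norm_pos_iff.mpr hD)
    using 3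
  ring

end Frobenius

theorem stmt10_general (k : ℕ) (hk : 1 ≤ k) (c₀ c₁ c₂ : ℝ) (hc₁ : 0 < c₁)
    (νe τe : ℝ) (hν : νe ∈ Set.Icc c₁ c₂) (hτ : τe ∈ Set.Icc 0 c₀) (e : ℝ)
    (S D : Matrix (Fin 3) (Fin 3) ℝ)
    (hS : S = Sk k (fun _ => νe) (fun _ => 0) (fun _ => τe) D e)
    (Dbar : Matrix (Fin 3) (Fin 3) ℝ)
    (hDbar : Dbar = if Mnorm S < τe + 2 * νe * τe / k then (1 / (2 * νe)) • trunc τe S else D) :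
    Mnorm (Dbar - D) ≤ 2 * τe / k ∧ 2 * τe / k ≤ 2 * c₀ / k := by
  obtain ⟨hτ₀, hτc₀⟩ := hτ
  have hν₀ : 0 < νe := hc₁.trans_le hν.1
  refine ⟨?_, by gcongr⟩
  rw [hDbar]
  split_ifs
  · calc _ ≤ τe / k := hS ▸ Mnorm_smul_trunc_Sk_sub_le hk hν₀ hτ₀ D e
      _ ≤ 2 * τe / k := by gcongr; linarith
  · rw [sub_self, Mnorm_zero]
    positivity

theorem stmt10 (k : ℕ) (hk : 1 ≤ k) (c₀ c₁ c₂ : ℝ) (hc₀ : 0 < c₀) (hc₁ : 0 < c₁) (hc₂ : 0 < c₂)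
    (νe τe : ℝ) (hν : νe ∈ Set.Icc c₁ c₂) (hτ : τe ∈ Set.Icc 0 c₀) (e : ℝ)
    (S D : Matrix (Fin 3) (Fin 3) ℝ)
    (hS : S = Sk k (fun _ => νe) (fun _ => 0) (fun _ => τe) D e)
    (Dbar : Matrix (Fin 3) (Fin 3) ℝ)
    (hDbar : Dbar = if Mnorm S < τe + 2 * νe * τe / k then (1 / (2 * νe)) • trunc τe S else D) :
    Mnorm (Dbar - D) ≤ 2 * τe / k ∧ 2 * τe / k ≤ 2 * c₀ / k :=
  stmt10_general k hk c₀ c₁ c₂ hc₁ νe τe hν hτ e S D hS Dbar hDbar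
end
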